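/- For the logarithmic gluing profile φ(δ) = −ln δ, the composition rule g(δ₁, δ₂) = φ⁻¹(φ(δ₁) + φ(δ₂)) equals δ₁·δ₂, and hence extends to a smooth (indeed real-analytic) function on [0,1]², whereas for the standard gluing profile φ(δ) = 1/δ − 1 the corresponding function δ₁δ₂/(δ₁ + δ₂ − δ₁δ₂) does not extend to a C¹ function on a neighborhood of (0,0) in [0,1]². -/

import Mathlib

/-!
Along a ray `t ↦ t • (a, b)` into the open square, `g(x, y) = xy / (x + y - xy)` satisfies
`g(t • (a, b)) = t · ab / (a + b - t·ab)`, whose right derivative at `0` is `ab / (a + b)`.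
A `C¹` extension `F` would have a derivative `L` at the corner with `L (a, b) = ab / (a + b)`
for all `a, b > 0`, which is not additive: `L (1, 2) + L (2, 1) = 4/3 ≠ 3/2 = L (3, 3)`.
-/

open Set Filter Topology

theorem HasFDerivWithinAt.apply_eq_of_eventuallyEq_along_ray
    {E G : Type*} [NormedAddCommGroup E] [NormedSpace ℝ E]
    [NormedAddCommGroup G] [NormedSpace ℝ G]
    {f : E → G} {L : E →L[ℝ] G} {s : Set E} {x v : E} {g : ℝ → G} {d : G}
    (hf : HasFDerivWithinAt f L s x)
    (hray : Tendsto (fun t : ℝ => x + t • v) (𝓝[>] 0) (𝓝[s] x))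
    (hfg : (fun t : ℝ => f (x + t • v)) =ᶠ[𝓝[>] 0] g) (hg : HasDerivAt g d 0) :
    L v = d := by
  have hray_deriv : HasDerivAt (fun t : ℝ => x + t • v) v 0 := by
    simpa using ((hasDerivAt_id (0 : ℝ)).smul_const v).const_add x
  have hcomp : HasDerivWithinAt (fun t : ℝ => f (x + t • v)) (L v) (Ioi 0) 0 := by
    have hf' : HasFDerivWithinAt f L s (x + (0 : ℝ) • v) := by simpa using hf
    simpa only [ContinuousLinearMap.comp_apply, ContinuousLinearMap.toSpanSingleton_apply,
      one_smul, Function.comp_def] using (HasFDerivWithinAt.comp_of_tendsto 0 hf'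
        (hray_deriv.hasDerivWithinAt (s := Ioi 0)).hasFDerivWithinAt
        (by simpa using hray)).hasDerivWithinAt
  have hf_eq : f x = g 0 := by
    have h₁ := hcomp.continuousWithinAt.tendsto
    have h₂ := hg.continuousAt.tendsto.mono_left (nhdsWithin_le_nhds (s := Ioi 0))
    simp only [zero_smul, add_zero] at h₁
    exact tendsto_nhds_unique (h₁.congr' hfg) h₂
  exact (uniqueDiffWithinAt_Ioi 0).eq_deriv _ hcomp
    (hg.hasDerivWithinAt.congr_of_eventuallyEq hfg (by simpa using hf_eq))

theorem tendsto_smul_nhdsGT_Ioc_prod_Ioc {a b : ℝ} (ha : 0 < a) (hb : 0 < b) :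
    Tendsto (fun t : ℝ => t • (a, b)) (𝓝[>] 0) (𝓝[Ioc 0 1 ×ˢ Ioc 0 1] 0) := by
  refine tendsto_nhdsWithin_of_tendsto_nhds_of_eventually_within _ ?_ ?_
  · exact ((continuous_id.smul continuous_const).tendsto' _ _ (zero_smul ℝ _)).mono_left
      nhdsWithin_le_nhds
  have hsmall (c : ℝ) : ∀ᶠ t in 𝓝[>] (0 : ℝ), t * c < 1 :=
    nhdsWithin_le_nhds <| (continuous_mul_const c).tendsto 0 |>.eventually
      (eventually_lt_nhds (by simp))
  filter_upwards [self_mem_nhdsWithin, hsmall a, hsmall b] with t (ht : 0 < t) hta htb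
  simp only [Prod.smul_mk, smul_eq_mul, mem_prod, mem_Ioc]
  exact ⟨⟨by positivity, hta.le⟩, by positivity, htb.le⟩

/-- `φ⁻¹(φ x + φ y)` for the standard gluing profile `φ(δ) = 1/δ - 1`. -/
noncomputable def standardGluingComposition (p : ℝ × ℝ) : ℝ :=
  p.1 * p.2 / (p.1 + p.2 - p.1 * p.2)

theorem standardGluingComposition_smul (a b : ℝ) {t : ℝ} (ht : t ≠ 0) :
    standardGluingComposition (t • (a, b)) = t * (a * b) / (a + b - t * (a * b)) := by
  rw [standardGluingComposition, Prod.smul_mk, smul_eq_mul, smul_eq_mul,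
    show t * a + t * b - (t * a) * (t * b) = t * (a + b - t * (a * b)) by ring,
    show (t * a) * (t * b) = t * (t * (a * b)) by ring, mul_div_mul_left _ _ ht]

theorem hasDerivAt_mul_div_sub_mul_zero {c d : ℝ} (hd : d ≠ 0) :
    HasDerivAt (fun t : ℝ => t * c / (d - t * c)) (c / d) 0 := by
  have hnum : HasDerivAt (fun t : ℝ => t * c) c 0 := by
    simpa using (hasDerivAt_id (0 : ℝ)).mul_const c
  refine (hnum.div (hnum.const_sub d) (by simpa using hd)).congr_deriv ?_
  rw [zero_mul, sub_zero, zero_mul, sub_zero, sq, mul_div_mul_right _ _ hd]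

theorem HasFDerivWithinAt.apply_eq_of_eqOn_standardGluingComposition
    {V : Set (ℝ × ℝ)} {F : ℝ × ℝ → ℝ} {L : ℝ × ℝ →L[ℝ] ℝ}
    (hV : V ∈ 𝓝[Icc 0 1 ×ˢ Icc 0 1] 0) (hF : HasFDerivWithinAt F L V 0)
    (hEq : ∀ p ∈ V ∩ (Ioc 0 1 ×ˢ Ioc 0 1), F p = standardGluingComposition p)
    {a b : ℝ} (ha : 0 < a) (hb : 0 < b) : L (a, b) = a * b / (a + b) := by
  have hray := tendsto_smul_nhdsGT_Ioc_prod_Ioc ha hb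
  have hV' : V ∈ 𝓝[Ioc 0 1 ×ˢ Ioc 0 1] 0 :=
    nhdsWithin_mono _ (Set.prod_mono Ioc_subset_Icc_self Ioc_subset_Icc_self) hV
  refine hF.apply_eq_of_eventuallyEq_along_ray ?_ ?_
    (hasDerivAt_mul_div_sub_mul_zero (by positivity))
  · simp only [zero_add]
    exact tendsto_nhdsWithin_of_tendsto_nhds_of_eventually_within _
      (hray.mono_right nhdsWithin_le_nhds) (hray hV')
  · filter_upwards [hray hV', hray self_mem_nhdsWithin, self_mem_nhdsWithin]
      with t htV htsq (ht : 0 < t)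
    rw [zero_add, hEq _ ⟨htV, htsq⟩, standardGluingComposition_smul a b ht.ne']

/-- For the logarithmic gluing profile `φ(δ) = -ln δ`, with inverse `φ⁻¹(t) = e^{-t}`,
the composition rule `g(δ₁,δ₂) = φ⁻¹(φ(δ₁) + φ(δ₂))` equals `δ₁·δ₂`, hence extends to a
smooth (real-analytic) function on `[0,1]²`; whereas for the standard gluing profile
`φ(δ) = 1/δ - 1` the corresponding function `δ₁δ₂/(δ₁+δ₂-δ₁δ₂)` does not extend to a
`C¹` function on any neighborhood of `(0,0)` in `[0,1]²`. -/
theorem logarithmic_profile_smooth_standard_profile_not_C1 :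
    (∀ δ₁ ∈ Ioc (0:ℝ) 1, ∀ δ₂ ∈ Ioc (0:ℝ) 1,
      Real.exp (-((-Real.log δ₁) + (-Real.log δ₂))) = δ₁ * δ₂) ∧
    (ContDiff ℝ ⊤ (fun p : ℝ × ℝ => p.1 * p.2) ∧
      AnalyticOn ℝ (fun p : ℝ × ℝ => p.1 * p.2) univ) ∧
    ¬ ∃ (V : Set (ℝ × ℝ)) (F : ℝ × ℝ → ℝ),
        V ∈ nhdsWithin (0, 0) (Icc 0 1 ×ˢ Icc 0 1) ∧
        ContDiffOn ℝ 1 F V ∧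
        (∀ p ∈ V ∩ (Ioc 0 1 ×ˢ Ioc 0 1),
          F p = p.1 * p.2 / (p.1 + p.2 - p.1 * p.2)) := by
  refine ⟨fun δ₁ h₁ δ₂ h₂ => ?_,
    ⟨contDiff_fst.mul contDiff_snd, analyticOn_fst.mul analyticOn_snd⟩, ?_⟩
  · rw [neg_add, neg_neg, neg_neg, Real.exp_add, Real.exp_log h₁.1, Real.exp_log h₂.1]
  rintro ⟨V, F, hV, hF, hEq⟩
  have h0V : (0 : ℝ × ℝ) ∈ V :=
    mem_of_mem_nhdsWithin
      (mk_mem_prod (left_mem_Icc.2 zero_le_one) (left_mem_Icc.2 zero_le_one)) hV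
  obtain ⟨L, hL⟩ := hF.differentiableOn one_ne_zero 0 h0V
  have hL_apply {a b : ℝ} (ha : 0 < a) (hb : 0 < b) : L (a, b) = a * b / (a + b) :=
    hL.apply_eq_of_eqOn_standardGluingComposition hV hEq ha hb
  have hadd : L (3, 3) = L (1, 2) + L (2, 1) := by
    rw [← map_add, Prod.mk_add_mk]
    norm_num
  rw [hL_apply three_pos three_pos, hL_apply one_pos two_pos, hL_apply two_pos one_pos] at hadd
  norm_num at hadd
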